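/- arXiv:2402.13774 — 2 statements merged into one kernel-verified Lean document; each statement's English description precedes it below -/
import Mathlib

section
/- Let H be a connected Γ-graded algebra over a field k, {z_ξ}_{ξ∈Ξ} a family of homogeneous elements of H_+, ◁ a total order on Ξ, and h: Ξ → ℕ∪{∞} with h(ξ) ≥ 2 for each ξ, satisfying conditions (a)–(c). Then for each V = (ν_1,…,ν_s) ∈ P(Ξ): if Π(V) ∉ P(Ξ,◁,h) then z_V ∈ Span({z_W : W ∈ P(Ξ,◁,h), W ◁_R Π(V)}), while if Π(V) ∈ P(Ξ,◁,h) then z_V ∈ (∏_{1≤i<j≤s with ν_i ▷ ν_j} a_{ν_i,ν_j})·z_{Π(V)} + Span({z_W : W ∈ P(Ξ,◁,h), W ◁_R Π(V)}). -/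
/-!
Induct on `Π(V)` for `◁_R` and, for fixed `Π(V)`, on `V` for the lexicographic order read from
the left. Both orders are well founded on the sequences of a fixed degree `γ`: by (c) and since
only finitely many degrees lie below `γ`, the letters of degree at most `γ` are well ordered, and
these sequences have length at most the total degree of `γ`.

If `V` has an adjacent inversion `ν μ` with `μ ◁ ν`, condition (b) writes `z_V` as
`a_{ν,μ} z_{V'}`, with `V'` the sequence with this inversion undone (smaller from the left), plus
`z_pre x z_suf` with `x ∈ H[ν,◁,h]`. If `V` is sorted but not in `P(Ξ,◁,h)`, then `z_V` has a
factor `z_ξ ^ h(ξ)`, to which condition (a) applies. In both cases only the homogeneous component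
of `x` matters; it is a combination of `z_U` with `U ∈ P(Ξ,◁,h)` nonempty and below the replaced
block, and replacing the block by `U` makes the sorted rearrangement strictly `◁_R`-smaller.
-/

open scoped TensorProduct
open Classical

noncomputable section

namespace AdamsPaper

variable {k : Type*} [Field k] {σ : Type*} {H : Type*}

/-- A connected `Γ`-graded algebra structure, `Γ = σ →₀ ℕ` a free abelian monoid. -/
def IsConnGradedAlg [Nonempty σ] [DecidableEq σ] [Ring H] [Algebra k H]
    (𝒜 : (σ →₀ ℕ) → Submodule k H) : Prop :=
  DirectSum.IsInternal 𝒜 ∧ (1 : H) ∈ 𝒜 0 ∧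
    (∀ α β : σ →₀ ℕ, ∀ x ∈ 𝒜 α, ∀ y ∈ 𝒜 β, x * y ∈ 𝒜 (α + β)) ∧
    Module.finrank k (𝒜 0) = 1

/-- A connected `Γ`-graded Hopf algebra: the grading is compatible with all structure maps. -/
def IsConnGradedHopf [Nonempty σ] [DecidableEq σ] [Ring H] [HopfAlgebra k H]
    (𝒜 : (σ →₀ ℕ) → Submodule k H) : Prop :=
  IsConnGradedAlg (k := k) 𝒜 ∧
    (∀ γ : σ →₀ ℕ, ∀ x ∈ 𝒜 γ,
      Coalgebra.comul (R := k) x ∈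
        ⨆ p : {p : (σ →₀ ℕ) × (σ →₀ ℕ) // p.1 + p.2 = γ},
          LinearMap.range (TensorProduct.mapIncl (𝒜 p.1.1) (𝒜 p.1.2))) ∧
    (∀ γ : σ →₀ ℕ, γ ≠ 0 → ∀ x ∈ 𝒜 γ, Coalgebra.counit (R := k) x = 0)

/-- Convolution product of linear endomorphisms of a bialgebra. -/
def conv [Ring H] [Bialgebra k H] (f g : H →ₗ[k] H) : H →ₗ[k] H :=
  LinearMap.mul' k H ∘ₗ TensorProduct.map f g ∘ₗ Coalgebra.comul (R := k)

/-- The convolution unit `η ∘ ε`. -/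
def convOne [Ring H] [Bialgebra k H] : H →ₗ[k] H :=
  Algebra.linearMap k H ∘ₗ Coalgebra.counit (R := k)

/-- Convolution powers. -/
def convPow [Ring H] [Bialgebra k H] (f : H →ₗ[k] H) : ℕ → (H →ₗ[k] H)
  | 0 => convOne
  | n + 1 => conv f (convPow f n)

/-- The Adams operators `Ψ_n`, `n ∈ ℤ`: convolution powers of the identity for `n ≥ 0`,
convolution powers of the antipode for `n < 0`. -/
def adams [Ring H] [HopfAlgebra k H] (n : ℤ) : H →ₗ[k] H :=
  if 0 ≤ n then convPow (LinearMap.id : H →ₗ[k] H) n.toNat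
  else convPow (HopfAlgebra.antipode (R := k) (A := H)) (-n).toNat

variable {Ξ : Type*}

/-- `z_V`, the ordered product of the family along a finite sequence `V`. -/
def zProd [Ring H] (z : Ξ → H) (V : List Ξ) : H := (V.map z).prod

/-- `|V|`, the degree of a finite sequence. -/
def degList (d : Ξ → σ →₀ ℕ) (V : List Ξ) : σ →₀ ℕ := (V.map d).sum

/-- The number of occurrences of `ξ` in `V`. -/
def cnt (V : List Ξ) (ξ : Ξ) : ℕ := (V.map fun a => if a = ξ then 1 else 0).sum

/-- `V ∈ P(Ξ,◁,h)`: `V` is nondecreasing with respect to `◁` and each element occurs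
fewer than `h ξ` times. -/
def Adm (lt : Ξ → Ξ → Prop) (h : Ξ → ℕ∞) (V : List Ξ) : Prop :=
  V.Chain' (fun a b => lt a b ∨ a = b) ∧ ∀ ξ : Ξ, (cnt V ξ : ℕ∞) < h ξ

/-- The subspace `H[ξ,◁,h]`: the span of the `z_V` with `V ∈ P(Ξ,◁,h)` whose last entry
is `◁ ξ`. -/
def Hspan [Ring H] [Algebra k H] (z : Ξ → H) (lt : Ξ → Ξ → Prop) (h : Ξ → ℕ∞)
    (ξ : Ξ) : Submodule k H :=
  Submodule.span k {x : H | ∃ V : List Ξ, Adm lt h V ∧ (∀ ν ∈ V.getLast?, lt ν ξ) ∧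
    x = zProd z V}

/-- `A_+`, the span of the components of nonzero degree of a (homogeneous) subspace `A`. -/
def posPart [Ring H] [Algebra k H] (𝒜 : (σ →₀ ℕ) → Submodule k H)
    (A : Submodule k H) : Submodule k H :=
  ⨆ γ : {γ : σ →₀ ℕ // γ ≠ 0}, A ⊓ 𝒜 γ.1

/-- Comparison of two finite sequences of the same degree, reading from the left. -/
def ltFromLeft (lt : Ξ → Ξ → Prop) (U V : List Ξ) : Prop :=
  ∃ l : ℕ, 1 ≤ l ∧ l ≤ min U.length V.length ∧
    (∀ i : ℕ, i + 1 < l → U[i]? = V[i]?) ∧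
    ∃ a b, U[l - 1]? = some a ∧ V[l - 1]? = some b ∧ lt a b

/-- The order `◁_L` on finite sequences. -/
def ltL (d : Ξ → σ →₀ ℕ) (lt : Ξ → Ξ → Prop) (U V : List Ξ) : Prop :=
  (∃ γ : σ →₀ ℕ, γ ≠ 0 ∧ degList d U + γ = degList d V) ∨
    (degList d U = degList d V ∧ ltFromLeft lt U V)

/-- The order `◁_R` on finite sequences. -/
def ltR (d : Ξ → σ →₀ ℕ) (lt : Ξ → Ξ → Prop) (U V : List Ξ) : Prop :=
  (∃ γ : σ →₀ ℕ, γ ≠ 0 ∧ degList d U + γ = degList d V) ∨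
    (degList d U = degList d V ∧ ltFromLeft lt U.reverse V.reverse)

end AdamsPaper

end

namespace AdamsPaper

open scoped Classical in
/-- The coefficient `∏_{1 ≤ i < j ≤ s, ν_i ▷ ν_j} a_{ν_i, ν_j}` attached to a sequence
`V = (ν_1, …, ν_s)`. -/
noncomputable def rearrCoeff {k Ξ : Type*} [Field k] (a : Ξ → Ξ → k)
    (lt : Ξ → Ξ → Prop) (V : List Ξ) : k :=
  ∏ p ∈ Finset.univ.filter
      (fun p : Fin V.length × Fin V.length => p.1 < p.2 ∧ lt (V.get p.2) (V.get p.1)),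
    a (V.get p.1) (V.get p.2)

open List

section Combinatorics

theorem ltFromLeft_append_cons {α : Type*} {lt : α → α → Prop} (A : List α) {x y : α}
    (s t : List α) (h : lt x y) : ltFromLeft lt (A ++ x :: s) (A ++ y :: t) := by
  refine ⟨A.length + 1, by omega, by simp, fun i hi => ?_, x, y, by simp, by simp, h⟩
  rw [getElem?_append_left (by omega), getElem?_append_left (by omega)]

theorem ltFromLeft_trans {α : Type*} {lt : α → α → Prop} [IsTrans α lt] {U V W : List α}
    (hUV : ltFromLeft lt U V) (hVW : ltFromLeft lt V W) : ltFromLeft lt U W := by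
  obtain ⟨l₁, hl₁, hl₁U, hUV, a, b, ha, hb, hab⟩ := hUV
  obtain ⟨l₂, hl₂, hl₂V, hVW, b', c, hb', hc, hbc⟩ := hVW
  refine ⟨min l₁ l₂, by omega, by grind,
    fun i hi => (hUV i (by omega)).trans (hVW i (by omega)), ?_⟩
  rcases lt_trichotomy l₁ l₂ with h | rfl | h
  · exact ⟨a, b, by rwa [min_eq_left h.le], by rw [min_eq_left h.le, ← hVW _ (by omega), hb],
      hab⟩
  · obtain rfl : b = b' := Option.some.inj (hb.symm.trans hb')
    exact ⟨a, c, by rwa [min_self], by rwa [min_self], _root_.trans hab hbc⟩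
  · exact ⟨b', c, by rw [min_eq_right h.le, hUV _ (by omega), hb'], by rwa [min_eq_right h.le],
      hbc⟩

theorem ltR_trans {α σ : Type*} {d : α → σ →₀ ℕ} {lt : α → α → Prop} [IsTrans α lt]
    {U V W : List α} (hUV : ltR d lt U V) (hVW : ltR d lt V W) : ltR d lt U W := by
  rcases hUV with ⟨γ₁, hγ₁, hUV⟩ | ⟨hUV, hUV'⟩ <;> rcases hVW with ⟨γ₂, hγ₂, hVW⟩ | ⟨hVW, hVW'⟩
  · exact Or.inl ⟨γ₁ + γ₂, fun h => hγ₁ (add_eq_zero.1 h).1, by rw [← hVW, ← hUV, add_assoc]⟩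
  · exact Or.inl ⟨γ₁, hγ₁, hUV.trans hVW⟩
  · exact Or.inl ⟨γ₂, hγ₂, hUV ▸ hVW⟩
  · exact Or.inr ⟨hUV.trans hVW, ltFromLeft_trans hUV' hVW'⟩

theorem cnt_eq_count {Ξ : Type*} [DecidableEq Ξ] (V : List Ξ) (ξ : Ξ) : cnt V ξ = V.count ξ := by
  induction V with
  | nil => rfl
  | cons x xs ih => by_cases hx : x = ξ <;> simp_all [cnt, add_comm]

theorem wellFoundedOn_ltFromLeft {α : Type*} [Preorder α] {S : Set α}
    (hS : S.WellFoundedOn (· < ·)) (n : ℕ) :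
    {L : List α | (∀ x ∈ L, x ∈ S) ∧ L.length ≤ n}.WellFoundedOn (ltFromLeft (· < ·)) := by
  have : WellFoundedLT S := ⟨hS⟩
  let e : α → WithBot S := fun x => if hx : x ∈ S then ((⟨x, hx⟩ : S) : WithBot S) else ⊥
  let tuple : List α → Fin n → WithBot S := fun L i => (L[(i : ℕ)]?).elim ⊥ e
  refine Set.wellFoundedOn_iff.2 (Subrelation.wf ?_ (InvImage.wf tuple
    (Pi.Lex.wellFounded (· < ·) fun _ => wellFounded_lt)))
  rintro L₁ L₂ ⟨⟨l, hl, hlmin, hagree, b₁, b₂, hb₁, hb₂, hb⟩, ⟨hS₁, -⟩, hS₂, hn⟩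
  refine ⟨⟨l - 1, by omega⟩, fun j hj => ?_, ?_⟩
  · have hj : (j : ℕ) < l - 1 := hj
    simp only [tuple, hagree j (by omega)]
  · have h₁ := hS₁ b₁ (mem_of_getElem? hb₁)
    have h₂ := hS₂ b₂ (mem_of_getElem? hb₂)
    simp [tuple, hb₁, hb₂, e, h₁, h₂, hb]

variable {α : Type*} [LinearOrder α]

theorem isChain_lt_or_eq_iff {l : List α} :
    l.IsChain (fun a b => a < b ∨ a = b) ↔ l.Pairwise (· ≤ ·) := by
  simp_rw [← le_iff_lt_or_eq]
  exact isChain_iff_pairwise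

theorem eq_insertionSort_append_of_perm {l X Y : List α} (hl : l.Pairwise (· ≤ ·))
    (hp : l ~ X ++ Y) (hXY : ∀ x ∈ X, ∀ y ∈ Y, x ≤ y) :
    l = X.insertionSort (· ≤ ·) ++ Y.insertionSort (· ≤ ·) := by
  have hX := perm_insertionSort (· ≤ ·) X
  have hY := perm_insertionSort (· ≤ ·) Y
  refine Perm.eq_of_pairwise' hl (pairwise_append.2 ⟨pairwise_insertionSort _ _,
    pairwise_insertionSort _ _, fun x hx y hy => hXY x (hX.subset hx) y (hY.subset hy)⟩)
    (hp.trans (hX.append hY).symm)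

theorem exists_eq_append_replicate_append {W : List α} (hW : W.Pairwise (· ≤ ·)) {ξ : α} {m : ℕ}
    (hm : m ≤ W.count ξ) : ∃ P₁ P₂, W = P₁ ++ replicate m ξ ++ P₂ := by
  obtain ⟨R, hR⟩ := (replicate_sublist_iff.2 hm).exists_perm_append
  have hp : W ~ R.filter (· < ξ) ++ (replicate m ξ ++ R.filter (fun x => !decide (x < ξ))) :=
    hR.trans (((filter_append_perm _ R).symm.append_left _).trans (perm_append_comm_assoc _ _ _))
  have hsplit := eq_insertionSort_append_of_perm hW hp (by grind)
  have hhigh := eq_insertionSort_append_of_perm (pairwise_insertionSort (· ≤ ·) _)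
    (perm_insertionSort (· ≤ ·) (replicate m ξ ++ R.filter (fun x => !decide (x < ξ)))) (by grind)
  rw [perm_replicate.1 (perm_insertionSort _ _)] at hhigh
  exact ⟨_, _, by rw [hsplit, hhigh, append_assoc]⟩

theorem forall_lt_of_getLast?_lt {U : List α} (hU : U.Pairwise (· ≤ ·)) {ξ : α}
    (hlast : ∀ ν ∈ U.getLast?, ν < ξ) : ∀ u ∈ U, u < ξ := by
  rcases eq_nil_or_concat U with rfl | ⟨s, y, rfl⟩
  · simp
  · rw [concat_eq_append] at hU hlast
    have hy : y < ξ := hlast y (by simp)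
    intro u hu
    rcases (by simpa using hu : u ∈ s ∨ u = y) with hu | rfl
    · exact ((pairwise_append.1 hU).2.2 u hu y (by simp)).trans_lt hy
    · exact hy

theorem exists_eq_append_cons_cons_of_not_pairwise {V : List α}
    (hV : ¬ V.Pairwise (· ≤ ·)) : ∃ pre ν μ suf, V = pre ++ ν :: μ :: suf ∧ μ < ν := by
  induction V with
  | nil => simp at hV
  | cons x xs ih =>
    match xs, ih with
    | [], _ => simp at hV
    | y :: ys, ih =>
      by_cases hxy : x ≤ y
      · obtain ⟨pre, ν, μ, suf, h, hμν⟩ := ih fun h => hV (by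
          rw [← isChain_iff_pairwise] at h ⊢; exact isChain_cons_cons.2 ⟨hxy, h⟩)
        exact ⟨x :: pre, ν, μ, suf, by simp [h], hμν⟩
      · exact ⟨[], x, y, ys, rfl, not_le.1 hxy⟩

theorem exists_eq_append_singleton_max {l : List α} (hl : l.Pairwise (· ≤ ·)) (hne : l ≠ []) :
    ∃ s x, l = s ++ [x] ∧ ∀ v ∈ l, v ≤ x := by
  obtain ⟨s, x, rfl⟩ := (eq_nil_or_concat l).resolve_left hne
  rw [concat_eq_append] at hl ⊢
  refine ⟨s, x, rfl, fun v hv => ?_⟩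
  rcases (by simpa using hv : v ∈ s ∨ v = x) with hv | rfl
  · exact (pairwise_append.1 hl).2.2 v hv x (by simp)
  · exact le_rfl

/-- Read from the right, `W'` and `W` both begin with the letters of `P` that are not below `β`;
then `W` continues with `β` and `W'` with a letter below `β`. -/
theorem ltFromLeft_reverse_of_perm {P B U W W' : List α} {β : α} (hβ : β ∈ B)
    (hB : ∀ b ∈ B, b ≤ β) (hU : U ≠ []) (hUβ : ∀ u ∈ U, u < β)
    (hW : W.Pairwise (· ≤ ·)) (hW' : W'.Pairwise (· ≤ ·)) (hWP : W ~ P ++ B) (hW'P : W' ~ P ++ U) :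
    ltFromLeft (· < ·) W'.reverse W.reverse := by
  set low := P.filter (· < β)
  set high := P.filter (fun x => !decide (x < β))
  have hlow : ∀ v ∈ low, v < β := fun v hv => of_decide_eq_true (mem_filter.1 hv).2
  have hsplit : ∀ {V Q : List α}, V.Pairwise (· ≤ ·) → V ~ P ++ Q → (∀ q ∈ Q, q ≤ β) →
      V = (low ++ Q).insertionSort (· ≤ ·) ++ high.insertionSort (· ≤ ·) := by
    intro V Q hV hVP hQ
    refine eq_insertionSort_append_of_perm hV (hVP.trans ?_) ?_
    · rw [append_assoc]
      exact ((filter_append_perm _ P).symm.append_right Q).trans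
        (by rw [append_assoc]; exact perm_append_comm.append_left low)
    · intro x hx y hy
      have hxβ : x ≤ β := (mem_append.1 hx).elim (fun hx => (hlow x hx).le) (hQ x)
      exact hxβ.trans (not_lt.1 (by simpa using (mem_filter.1 hy).2))
  have hsort (Q : List α) := perm_insertionSort (· ≤ ·) (low ++ Q)
  have hne {Q : List α} (hQ : Q ≠ []) : (low ++ Q).insertionSort (· ≤ ·) ≠ [] := fun h =>
    hQ (append_eq_nil_iff.1 (perm_nil.1 (h ▸ hsort Q).symm)).2
  obtain ⟨s, x, hx, -⟩ :=
    exists_eq_append_singleton_max (pairwise_insertionSort _ _) (hne hU)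
  obtain ⟨t, y, hy, hymax⟩ :=
    exists_eq_append_singleton_max (pairwise_insertionSort _ _) (hne (ne_nil_of_mem hβ))
  have hxβ : x < β := by
    rcases mem_append.1 ((hsort U).subset (hx ▸ mem_append_right s (mem_singleton_self x)))
      with hx | hx
    exacts [hlow x hx, hUβ x hx]
  have hyβ : y = β := by
    refine le_antisymm ?_ (hymax β ((hsort B).symm.subset (mem_append_right low hβ)))
    rcases mem_append.1 ((hsort B).subset (hy ▸ mem_append_right t (mem_singleton_self y)))
      with hy | hy
    exacts [(hlow y hy).le, hB y hy]
  rw [hsplit hW' hW'P fun u hu => (hUβ u hu).le, hsplit hW hWP hB, hx, hy, hyβ]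
  simpa using ltFromLeft_append_cons _ _ _ hxβ

end Combinatorics

section Coefficient

variable {k Ξ : Type*} [Field k] (a : Ξ → Ξ → k) (lt : Ξ → Ξ → Prop)

theorem rearrCoeff_cons (x : Ξ) (xs : List Ξ) :
    rearrCoeff a lt (x :: xs) =
      (xs.map fun y => if lt y x then a x y else 1).prod * rearrCoeff a lt xs := by
  simp only [rearrCoeff, Finset.prod_filter, Fintype.prod_prod_type, length_cons,
    Fin.prod_univ_succ, false_and, if_false, one_mul, Fin.succ_pos, true_and,
    Fin.not_lt_zero, Fin.succ_lt_succ_iff, get_cons_zero]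
  rw [← Fin.prod_univ_fun_getElem]
  rfl

theorem rearrCoeff_eq_one_of_pairwise {V : List Ξ} (hV : V.Pairwise fun x y => ¬ lt y x) :
    rearrCoeff a lt V = 1 := by
  refine Finset.prod_eq_one fun p hp => ?_
  obtain ⟨hlt, hinv⟩ := (Finset.mem_filter.1 hp).2
  exact absurd hinv (pairwise_iff_get.1 hV _ _ hlt)

theorem rearrCoeff_swap {μ ν : Ξ} (hμν : lt μ ν) (hνμ : ¬ lt ν μ) (pre suf : List Ξ) :
    rearrCoeff a lt (pre ++ ν :: μ :: suf) = a ν μ * rearrCoeff a lt (pre ++ μ :: ν :: suf) := by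
  induction pre with
  | nil => simp only [nil_append, rearrCoeff_cons, map_cons, prod_cons, hμν, hνμ, if_true,
      if_false]; ring
  | cons x pre ih =>
    simp only [cons_append, rearrCoeff_cons, ih,
      ((Perm.swap μ ν suf).append_left pre).map _ |>.prod_eq]
    ring

end Coefficient

theorem mem_span_image_of_mem_graded {R M ι α : Type*} [DecidableEq ι] [Semiring R]
    [AddCommMonoid M] [Module R M] (ℳ : ι → Submodule R M) [DirectSum.Decomposition ℳ]
    {f : α → M} {deg : α → ι} (hf : ∀ a, f a ∈ ℳ (deg a)) {s : Set α} {i : ι} {x : M}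
    (hx : x ∈ Submodule.span R (f '' s)) (hxi : x ∈ ℳ i) :
    x ∈ Submodule.span R (f '' {a ∈ s | deg a = i}) := by
  let π : M →ₗ[R] M := (ℳ i).subtype ∘ₗ DirectSum.component R ι (fun j => ℳ j) i ∘ₗ
    (DirectSum.decomposeLinearEquiv ℳ).toLinearMap
  have hπ (y : M) : π y = DirectSum.decompose ℳ y i := rfl
  have hπx := Submodule.mem_map_of_mem (f := π) hx
  rw [Submodule.map_span, hπ, DirectSum.decompose_of_mem_same ℳ hxi] at hπx
  refine Submodule.span_le.2 ?_ hπx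
  rintro _ ⟨_, ⟨a, ha, rfl⟩, rfl⟩
  by_cases hai : deg a = i
  · rw [hπ, DirectSum.decompose_of_mem_same ℳ (hai ▸ hf a)]
    exact Submodule.subset_span ⟨a, ⟨ha, hai⟩, rfl⟩
  · rw [hπ, DirectSum.decompose_of_mem_ne ℳ (hf a) hai]
    exact zero_mem _

section Degree

variable {Ξ σ : Type*} (d : Ξ → σ →₀ ℕ)

theorem degList_append (U V : List Ξ) : degList d (U ++ V) = degList d U + degList d V := by
  simp [degList]

theorem degList_perm {U V : List Ξ} (h : U ~ V) : degList d U = degList d V :=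
  (h.map d).sum_eq

theorem le_degList_of_mem {x : Ξ} {V : List Ξ} (hx : x ∈ V) : d x ≤ degList d V :=
  le_sum_of_mem (mem_map_of_mem hx)

variable {d}

theorem degList_ne_zero (hd : ∀ ξ, d ξ ≠ 0) {V : List Ξ} (hV : V ≠ []) : degList d V ≠ 0 := by
  obtain ⟨x, hx⟩ := exists_mem_of_ne_nil V hV
  exact fun h => hd x (nonpos_iff_eq_zero.1 (h ▸ le_degList_of_mem d hx))

theorem length_le_degree_degList (hd : ∀ ξ, d ξ ≠ 0) (V : List Ξ) :
    V.length ≤ (degList d V).degree := by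
  induction V with
  | nil => simp
  | cons x xs ih =>
    have := (Finsupp.degree_eq_zero_iff (d x)).not.2 (hd x)
    simp only [degList, map_cons, sum_cons, map_add, length_cons] at ih ⊢
    omega

theorem wellFoundedOn_degList_eq [LinearOrder Ξ] (hd : ∀ ξ, d ξ ≠ 0)
    (hwell : ∀ γ, WellFounded fun u v : {ξ : Ξ // d ξ = γ} => u.1 < v.1) (γ : σ →₀ ℕ) :
    {L : List Ξ | degList d L = γ}.WellFoundedOn (ltFromLeft (· < ·)) := by
  have hS : {ξ | d ξ ≤ γ}.WellFoundedOn (· < ·) := by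
    refine (((Finset.Iic γ).wellFoundedOn_sup (f := fun δ => {ξ | d ξ = δ})).2
      fun δ _ => hwell δ).subset fun ξ hξ => ?_
    simpa [Finset.sup_set_eq_biUnion] using hξ
  exact (wellFoundedOn_ltFromLeft hS γ.degree).subset fun L hL =>
    ⟨fun x hx => hL ▸ le_degList_of_mem d hx, hL ▸ length_le_degree_degList hd L⟩

end Degree

section Products

variable {σ H Ξ : Type*} [Ring H] (z : Ξ → H)

theorem zProd_append (U V : List Ξ) : zProd z (U ++ V) = zProd z U * zProd z V := by
  simp [zProd]

theorem zProd_cons (x : Ξ) (V : List Ξ) : zProd z (x :: V) = z x * zProd z V := by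
  simp [zProd]

theorem zProd_replicate (m : ℕ) (ξ : Ξ) : zProd z (replicate m ξ) = z ξ ^ m := by
  simp [zProd]

theorem zProd_mem_degList {S : Type*} [SetLike S H] {𝒜 : (σ →₀ ℕ) → S}
    [SetLike.GradedMonoid 𝒜] {z : Ξ → H} {d : Ξ → σ →₀ ℕ} (hz : ∀ ξ, z ξ ∈ 𝒜 (d ξ))
    (V : List Ξ) : zProd z V ∈ 𝒜 (degList d V) :=
  SetLike.list_prod_map_mem_graded V d z fun ξ _ => hz ξ

end Products

section Rearrangement

variable {k σ H Ξ : Type*} [Field k] [Ring H] [Algebra k H] [LinearOrder Ξ]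
  (z : Ξ → H) (d : Ξ → σ →₀ ℕ) (h : Ξ → ℕ∞)

theorem hspan_eq_span_image (ξ : Ξ) : Hspan (k := k) z (· < ·) h ξ =
    Submodule.span k (zProd z '' {V | Adm (· < ·) h V ∧ ∀ ν ∈ V.getLast?, ν < ξ}) := by
  simp only [Hspan, Set.image, Set.mem_ofPred_eq, eq_comm, and_assoc]

variable (k) in
def lowerSpan (W : List Ξ) : Submodule k H :=
  Submodule.span k {x : H | ∃ U : List Ξ, Adm (· < ·) h U ∧ ltR d (· < ·) U W ∧ x = zProd z U}

/-- Both cases of the theorem at once: the coefficient of `z_W` is `0` when `W ∉ P(Ξ,◁,h)`. -/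
def RearrangesTo (a : Ξ → Ξ → k) (V W : List Ξ) : Prop :=
  zProd z V - (if Adm (· < ·) h W then rearrCoeff a (· < ·) V else 0) • zProd z W ∈
    lowerSpan k z d h W

/-- The induction hypothesis at `W`: the claim for every `V` of the degree of `W` with
`Π(V) ◁_R W`. -/
def RearrangesBelow (a : Ξ → Ξ → k) (W : List Ξ) : Prop :=
  ∀ V, degList d V = degList d W →
    ltFromLeft (· < ·) (V.insertionSort (· ≤ ·)).reverse W.reverse →
    RearrangesTo z d h a V (V.insertionSort (· ≤ ·))

variable {z d h} {a : Ξ → Ξ → k}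

theorem lowerSpan_mono {W' W : List Ξ} (hW : ltR d (· < ·) W' W) :
    lowerSpan k z d h W' ≤ lowerSpan k z d h W :=
  Submodule.span_mono fun _ ⟨U, hU, hUW, hx⟩ => ⟨U, hU, ltR_trans hUW hW, hx⟩

theorem RearrangesTo.mem_lowerSpan {V W' W : List Ξ}
    (hV : RearrangesTo z d h a V W') (hW' : ltR d (· < ·) W' W) :
    zProd z V ∈ lowerSpan k z d h W := by
  have hlead : (if Adm (· < ·) h W' then rearrCoeff a (· < ·) V else 0) • zProd z W' ∈
      lowerSpan k z d h W := by
    split_ifs with hadm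
    · exact Submodule.smul_mem _ _ (Submodule.subset_span ⟨W', hadm, hW', rfl⟩)
    · rw [zero_smul]
      exact zero_mem _
  simpa using add_mem (lowerSpan_mono hW' hV) hlead

variable [DecidableEq σ] {𝒜 : (σ →₀ ℕ) → Submodule k H} [SetLike.GradedMonoid 𝒜]
  [DirectSum.Decomposition 𝒜]

theorem mul_mul_mem_lowerSpan (hz : ∀ ξ, z ξ ∈ 𝒜 (d ξ)) (hd : ∀ ξ, d ξ ≠ 0)
    {W : List Ξ} (hW : W.Pairwise (· ≤ ·))
    (hbelow : RearrangesBelow z d h a W)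
    {pre B suf : List Ξ} {β : Ξ} (hWB : W ~ pre ++ B ++ suf) (hβ : β ∈ B) (hB : ∀ b ∈ B, b ≤ β)
    {x : H} (hx : x ∈ Hspan (k := k) z (· < ·) h β) (hxB : x ∈ 𝒜 (degList d B)) :
    zProd z pre * x * zProd z suf ∈ lowerSpan k z d h W := by
  rw [hspan_eq_span_image] at hx
  let L : H →ₗ[k] H := LinearMap.mulRight k (zProd z suf) ∘ₗ LinearMap.mulLeft k (zProd z pre)
  have hLx := Submodule.mem_map_of_mem (f := L)
    (mem_span_image_of_mem_graded 𝒜 (zProd_mem_degList hz) hx hxB)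
  rw [Submodule.map_span] at hLx
  refine Submodule.span_le.2 ?_ hLx
  rintro _ ⟨_, ⟨U, ⟨⟨hUadm, hUlast⟩, hUdeg⟩, rfl⟩, rfl⟩
  have hU : U ≠ [] := by
    rintro rfl
    exact degList_ne_zero hd (ne_nil_of_mem hβ) hUdeg.symm
  have hmid (Q : List Ξ) : pre ++ Q ++ suf ~ pre ++ suf ++ Q := by
    simpa only [append_assoc] using perm_append_comm.append_left pre
  have hWperm := hWB.trans (hmid B)
  have hlt := ltFromLeft_reverse_of_perm hβ hB hU
    (forall_lt_of_getLast?_lt (isChain_lt_or_eq_iff.1 hUadm.1) hUlast) hW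
    (pairwise_insertionSort _ _) hWperm ((perm_insertionSort _ _).trans (hmid U))
  have hdeg : degList d (pre ++ U ++ suf) = degList d W := by
    rw [degList_perm d (hmid U), degList_perm d hWperm]
    simp only [degList_append, hUdeg]
  have := (hbelow _ hdeg hlt).mem_lowerSpan
    (Or.inr ⟨(degList_perm d (perm_insertionSort _ _)).trans hdeg, hlt⟩)
  simpa [L, zProd_append, mul_assoc] using this

theorem rearrangesTo_self (hz : ∀ ξ, z ξ ∈ 𝒜 (d ξ)) (hd : ∀ ξ, d ξ ≠ 0) (hh : ∀ ξ, h ξ ≠ 0)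
    (hpow : ∀ ξ : Ξ, ∀ m : ℕ, h ξ = m → z ξ ^ m ∈ Hspan (k := k) z (· < ·) h ξ)
    {W : List Ξ} (hW : W.Pairwise (· ≤ ·))
    (hbelow : RearrangesBelow z d h a W) :
    RearrangesTo z d h a W W := by
  unfold RearrangesTo
  split_ifs with hadm
  · rw [rearrCoeff_eq_one_of_pairwise _ _ (hW.imp not_lt.2), one_smul, sub_self]
    exact zero_mem _
  rw [zero_smul, sub_zero]
  have hchain : W.IsChain (fun a b => a < b ∨ a = b) := isChain_lt_or_eq_iff.2 hW
  obtain ⟨ξ, hξ⟩ : ∃ ξ, h ξ ≤ cnt W ξ := by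
    simp only [Adm, not_and, not_forall, not_lt] at hadm
    exact hadm hchain
  obtain ⟨m, hm⟩ := ENat.ne_top_iff_exists.1 (ne_top_of_le_ne_top (ENat.natCast_ne_top _) hξ)
  have hm0 : m ≠ 0 := by
    rintro rfl
    exact hh ξ hm.symm
  obtain ⟨P₁, P₂, rfl⟩ := exists_eq_append_replicate_append hW (ξ := ξ) (m := m)
    (by rw [← cnt_eq_count, ← ENat.natCast_le_natCast, hm]; exact hξ)
  simpa [zProd_append, zProd_replicate, mul_assoc] using
    mul_mul_mem_lowerSpan hz hd hW hbelow (Perm.refl _) (mem_replicate.2 ⟨hm0, rfl⟩)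
      (fun b hb => (eq_of_mem_replicate hb).le) (hpow ξ m hm.symm)
      (by simpa [zProd_replicate] using zProd_mem_degList hz (replicate m ξ))

theorem RearrangesTo.of_swap (hz : ∀ ξ, z ξ ∈ 𝒜 (d ξ)) (hd : ∀ ξ, d ξ ≠ 0)
    {W : List Ξ} (hW : W.Pairwise (· ≤ ·))
    (hbelow : RearrangesBelow z d h a W)
    {pre suf : List Ξ} {μ ν : Ξ} (hμν : μ < ν)
    (hcomm : z ν * z μ - a ν μ • (z μ * z ν) ∈ Hspan (k := k) z (· < ·) h ν)
    (hWV : W ~ pre ++ ν :: μ :: suf) (hR : RearrangesTo z d h a (pre ++ μ :: ν :: suf) W) :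
    RearrangesTo z d h a (pre ++ ν :: μ :: suf) W := by
  have hdeg : z ν * z μ - a ν μ • (z μ * z ν) ∈ 𝒜 (degList d [ν, μ]) := by
    have hνμ : degList d [ν, μ] = d ν + d μ := by simp [degList]
    rw [hνμ]
    refine sub_mem (SetLike.mul_mem_graded (hz ν) (hz μ)) (Submodule.smul_mem _ _ ?_)
    rw [add_comm]
    exact SetLike.mul_mem_graded (hz μ) (hz ν)
  have hcomm' := mul_mul_mem_lowerSpan hz hd hW hbelow (pre := pre) (suf := suf)
    (by simpa using hWV) (mem_cons_self ..) (by simp [hμν.le]) hcomm hdeg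
  unfold RearrangesTo at hR ⊢
  rw [rearrCoeff_swap a (· < ·) hμν (not_lt.2 hμν.le)]
  convert add_mem hcomm' (Submodule.smul_mem _ (a ν μ) hR) using 1
  split_ifs <;> simp [zProd_append, zProd_cons, mul_sub, sub_mul, smul_sub, mul_smul, mul_assoc]

theorem rearrangesTo_of_perm (hz : ∀ ξ, z ξ ∈ 𝒜 (d ξ)) (hd : ∀ ξ, d ξ ≠ 0) (hh : ∀ ξ, h ξ ≠ 0)
    (hpow : ∀ ξ : Ξ, ∀ m : ℕ, h ξ = m → z ξ ^ m ∈ Hspan (k := k) z (· < ·) h ξ)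
    (hcomm : ∀ μ ν : Ξ, μ < ν → z ν * z μ - a ν μ • (z μ * z ν) ∈ Hspan (k := k) z (· < ·) h ν)
    (hwell : ∀ γ, WellFounded fun u v : {ξ : Ξ // d ξ = γ} => u.1 < v.1)
    {V W : List Ξ} (hWV : W ~ V) (hW : W.Pairwise (· ≤ ·)) : RearrangesTo z d h a V W := by
  set γ := degList d V
  have hwf := Set.wellFoundedOn_iff.1 (wellFoundedOn_degList_eq hd hwell γ)
  have hlex := InvImage.wf (fun q : List Ξ × List Ξ => (q.2.reverse, q.1)) (hwf.prod_lex hwf)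
  suffices ∀ q : List Ξ × List Ξ, degList d q.1 = γ → q.2 ~ q.1 → q.2.Pairwise (· ≤ ·) →
      RearrangesTo z d h a q.1 q.2 from this (V, W) rfl hWV hW
  clear hWV hW
  intro q
  induction q using hlex.induction with | _ q IH => ?_
  obtain ⟨V, W⟩ := q
  rintro (hV : degList d V = γ) (hWV : W ~ V) (hW : W.Pairwise (· ≤ ·))
  have hWγ : degList d W = γ := (degList_perm d hWV).trans hV
  have hbelow : RearrangesBelow z d h a W := by
    intro V' hV' hlt
    have hsort := perm_insertionSort (· ≤ ·) V'
    refine IH (V', _) (Prod.Lex.left _ _ ⟨hlt, ?_, ?_⟩) (hV'.trans hWγ) hsort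
      (pairwise_insertionSort _ _)
    · exact (degList_perm d ((reverse_perm _).trans hsort)).trans (hV'.trans hWγ)
    · simpa [degList_perm d (reverse_perm _)] using hWγ
  by_cases hVs : V.Pairwise (· ≤ ·)
  · obtain rfl : W = V := Perm.eq_of_pairwise' hW hVs hWV
    exact rearrangesTo_self hz hd hh hpow hW hbelow
  obtain ⟨pre, ν, μ, suf, rfl, hμν⟩ := exists_eq_append_cons_cons_of_not_pairwise hVs
  have hswap : pre ++ μ :: ν :: suf ~ pre ++ ν :: μ :: suf := (Perm.swap ν μ suf).append_left pre
  have hV' := (degList_perm d hswap).trans hV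
  exact (IH (pre ++ μ :: ν :: suf, W)
    (Prod.Lex.right _ ⟨ltFromLeft_append_cons pre _ _ hμν, hV', hV⟩) hV'
    (hWV.trans hswap.symm) hW).of_swap hz hd hW hbelow hμν (hcomm μ ν hμν) hWV

end Rearrangement

/-- **Lemma (rearrangement).** Under conditions (a)–(c), for any finite sequence `V`,
letting `Π(V)` be its unique nondecreasing rearrangement (formalized as any `W` which is a
nondecreasing permutation of `V`): if `Π(V) ∉ P(Ξ,◁,h)` then `z_V` lies in the span of
the `z_U` with `U ∈ P(Ξ,◁,h)`, `U ◁_R Π(V)`; if `Π(V) ∈ P(Ξ,◁,h)` then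
`z_V ∈ (∏_{i<j, ν_i ▷ ν_j} a_{ν_i,ν_j})·z_{Π(V)}` plus that span. -/
theorem rearrangement
    {k σ H : Type*} [Field k] [Nonempty σ] [DecidableEq σ] [Ring H] [Algebra k H]
    (𝒜 : (σ →₀ ℕ) → Submodule k H) (hH : IsConnGradedAlg (k := k) 𝒜)
    {Ξ : Type*} (z : Ξ → H) (d : Ξ → σ →₀ ℕ)
    (hz : ∀ ξ, z ξ ∈ 𝒜 (d ξ)) (hd : ∀ ξ, d ξ ≠ 0)
    (lt : Ξ → Ξ → Prop) (hlt : IsStrictTotalOrder Ξ lt)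
    (h : Ξ → ℕ∞) (hh : ∀ ξ, 2 ≤ h ξ)
    (a : Ξ → Ξ → k)
    -- condition (a)
    (hpow : ∀ ξ : Ξ, ∀ m : ℕ, h ξ = (m : ℕ∞) → z ξ ^ m ∈ Hspan (k := k) z lt h ξ)
    -- condition (b)
    (hcomm : ∀ μ ν : Ξ, lt μ ν → a ν μ ≠ 0 ∧
      z ν * z μ - a ν μ • (z μ * z ν) ∈ Hspan (k := k) z lt h ν)
    -- condition (c)
    (hwell : ∀ γ : σ →₀ ℕ, WellFounded (fun u v : {ξ : Ξ // d ξ = γ} => lt u.1 v.1)) :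
    ∀ V W : List Ξ, W.Perm V → W.Chain' (fun u v => lt u v ∨ u = v) →
      (¬ Adm lt h W →
        zProd z V ∈ Submodule.span k
          {x : H | ∃ U : List Ξ, Adm lt h U ∧ ltR d lt U W ∧ x = zProd z U}) ∧
      (Adm lt h W →
        zProd z V - rearrCoeff a lt V • zProd z W ∈ Submodule.span k
          {x : H | ∃ U : List Ξ, Adm lt h U ∧ ltR d lt U W ∧ x = zProd z U}) := by
  -- the strict order of `linearOrderOfSTO lt` is `lt` itself, by definition
  let _ : LinearOrder Ξ := linearOrderOfSTO lt
  have : SetLike.GradedMonoid 𝒜 :=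
    { one_mem := hH.2.1, mul_mem := fun _ _ _ _ ha hb => hH.2.2.1 _ _ _ ha _ hb }
  let _ : DirectSum.Decomposition 𝒜 := hH.1.chooseDecomposition
  intro V W hWV hW
  have hR : RearrangesTo z d h a V W :=
    rearrangesTo_of_perm hz hd (fun ξ => (lt_of_lt_of_le (by norm_num) (hh ξ)).ne') hpow
      (fun μ ν hμν => (hcomm μ ν hμν).2) hwell hWV (isChain_lt_or_eq_iff.1 hW)
  refine ⟨fun hadm => ?_, fun hadm => ?_⟩
  · rwa [RearrangesTo, if_neg (show ¬ Adm (· < ·) h W from hadm), zero_smul, sub_zero] at hR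
  · rwa [RearrangesTo, if_pos (show Adm (· < ·) h W from hadm)] at hR

end AdamsPaper
end

section
/- A permutation σ ∈ 𝔖 is a Lyndon permutation if and only if φ(σ) is a Lyndon word on the alphabet ℭ of connected permutations. -/
noncomputable section

namespace AdamsPaper

/-- The pseudo-lexicographic order on words associated to a (strict) order on the
alphabet: `u <_lex v` iff `u = v ++ w` for some nonempty `w`, or `u = r ++ x :: s` and
`v = r ++ y :: t` with `x < y`. -/
def ltLex {X : Type*} (ltX : X → X → Prop) (u v : List X) : Prop :=
  (∃ w : List X, w ≠ [] ∧ u = v ++ w) ∨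
    ∃ (r s t : List X) (x y : X), ltX x y ∧ u = r ++ x :: s ∧ v = r ++ y :: t

/-- The order `≺` on permutations: the pseudo-lexicographic order on one-line notation
words over `ℤ₊ = {1 < 2 < 3 < ⋯}`. -/
def permLt (u v : List ℕ) : Prop := ltLex (· < ·) u v

/-- `u` is (the one-line notation of) a permutation of `{1, …, m}`, `m = u.length`. -/
def IsPermWord (u : List ℕ) : Prop :=
  u.Nodup ∧ ∀ i ∈ u, 1 ≤ i ∧ i ≤ u.length

/-- The product `σ × τ` of permutations in one-line notation. -/
def mulX (u v : List ℕ) : List ℕ := u ++ v.map (· + u.length)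

/-- The permutation `σ₁ × ⋯ × σ_r` associated to a word `(σ₁, …, σ_r)` on the alphabet
of permutations. -/
def prodX (L : List (List ℕ)) : List ℕ := L.foldr mulX []

/-- `u` is a connected permutation: a nonempty permutation word preserving no proper
initial segment `{1, …, i}`, `1 ≤ i ≤ m − 1`. -/
def IsConnectedPerm (u : List ℕ) : Prop :=
  IsPermWord u ∧ u ≠ [] ∧ ∀ i : ℕ, 1 ≤ i → i < u.length → ¬ (∀ x ∈ u.take i, x ≤ i)

/-- A Lyndon permutation: a nonempty permutation `σ` such that `σ₂ × σ₁ ≺ σ` for every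
factorization `σ = σ₁ × σ₂` with `σ₁, σ₂ ≠ θ`. -/
def IsLyndonPerm (u : List ℕ) : Prop :=
  u ≠ [] ∧ ∀ u₁ u₂ : List ℕ, IsPermWord u₁ → IsPermWord u₂ → u₁ ≠ [] → u₂ ≠ [] →
    u = mulX u₁ u₂ → permLt (mulX u₂ u₁) u

/-- A Lyndon word on the alphabet `ℭ` of connected permutations, with respect to the
restriction of `≺` to `ℭ`. -/
def IsLyndonWordOnC (L : List (List ℕ)) : Prop :=
  L ≠ [] ∧ ∀ v w : List (List ℕ), v ≠ [] → w ≠ [] → L = v ++ w →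
    ltLex permLt (w ++ v) L

/-!
The map `ψ : L ↦ prodX L` is strictly monotone from words on `ℭ` with `<_lex` to `(𝔖, ≺)`:
at the first differing letters `x ≺ y` of two words, `x` cannot be a proper extension of `y`
because `x` is connected, so `x` and `y` differ at some position and the products differ there
too, by the same letters shifted by a common amount. Both orders being total, `ψ` also reflects
the order. Moreover, a break point of `prodX L` (a proper initial segment `{1, …, i}` it
preserves) cannot lie inside a connected factor, so the factorizations `prodX L = σ₁ × σ₂` are
exactly the `prodX v × prodX w` with `L = v ++ w`, and the conjugates `σ₂ × σ₁` are the
`prodX (w ++ v)`. Thus the two Lyndon conditions translate into each other.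
-/

section LtLex

variable {X : Type*} {r : X → X → Prop}

@[simp] theorem not_ltLex_nil (v : List X) : ¬ ltLex r [] v := by
  rintro (⟨w, hw, h⟩ | ⟨_, _, _, _, _, _, h, _⟩)
  · exact hw (List.append_eq_nil_iff.mp h.symm).2
  · simp at h

@[simp] theorem ltLex_nil_iff {u : List X} : ltLex r u [] ↔ u ≠ [] := by
  refine ⟨?_, fun h => Or.inl ⟨u, h, rfl⟩⟩
  rintro (⟨w, hw, rfl⟩ | ⟨_, _, _, _, _, _, rfl, h⟩)
  · simpa using hw
  · simp at h

theorem ltLex_cons_cons_iff {x y : X} {s t : List X} :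
    ltLex r (x :: s) (y :: t) ↔ r x y ∨ (x = y ∧ ltLex r s t) := by
  constructor
  · rintro (⟨w, hw, h⟩ | ⟨_ | ⟨c, p⟩, s', t', a, b, hab, hu, hv⟩)
    · obtain ⟨rfl, rfl⟩ := List.cons_eq_cons.mp h
      exact Or.inr ⟨rfl, Or.inl ⟨w, hw, rfl⟩⟩
    · obtain ⟨rfl, rfl⟩ := List.cons_eq_cons.mp hu
      obtain ⟨rfl, rfl⟩ := List.cons_eq_cons.mp hv
      exact Or.inl hab
    · obtain ⟨rfl, rfl⟩ := List.cons_eq_cons.mp hu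
      obtain ⟨rfl, rfl⟩ := List.cons_eq_cons.mp hv
      exact Or.inr ⟨rfl, Or.inr ⟨p, s', t', a, b, hab, rfl, rfl⟩⟩
  · rintro (h | ⟨rfl, ⟨w, hw, rfl⟩ | ⟨p, s', t', a, b, hab, rfl, rfl⟩⟩)
    · exact Or.inr ⟨[], s, t, x, y, h, rfl, rfl⟩
    · exact Or.inl ⟨w, hw, rfl⟩
    · exact Or.inr ⟨x :: p, s', t', a, b, hab, rfl, rfl⟩

theorem ltLex_asymm (hr : ∀ a b, r a b → ¬ r b a) :
    ∀ {u v : List X}, ltLex r u v → ¬ ltLex r v u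
  | [], _, h, _ => not_ltLex_nil _ h
  | _ :: _, [], _, h' => not_ltLex_nil _ h'
  | x :: s, y :: t, h, h' => by
    rcases ltLex_cons_cons_iff.mp h with hxy | ⟨rfl, hst⟩ <;>
      rcases ltLex_cons_cons_iff.mp h' with hyx | ⟨hyx, hts⟩
    · exact hr _ _ hxy hyx
    · exact hr _ _ hxy (hyx ▸ hxy)
    · exact hr _ _ hyx hyx
    · exact ltLex_asymm hr hst hts

theorem ltLex_trichotomous (hr : ∀ a b : X, a ≠ b → r a b ∨ r b a) :
    ∀ {u v : List X}, u ≠ v → ltLex r u v ∨ ltLex r v u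
  | [], [], h => absurd rfl h
  | [], _ :: _, _ => Or.inr (ltLex_nil_iff.mpr (List.cons_ne_nil _ _))
  | _ :: _, [], _ => Or.inl (ltLex_nil_iff.mpr (List.cons_ne_nil _ _))
  | x :: s, y :: t, h => by
    simp only [ltLex_cons_cons_iff]
    by_cases hxy : x = y
    · subst hxy
      have hst : s ≠ t := fun hst => h (hst ▸ rfl)
      rcases ltLex_trichotomous hr hst with h | h <;> simp [h]
    · rcases hr x y hxy with h | h <;> simp [h]

theorem ltLex.map {f : X → X} (hf : ∀ a b, r a b → r (f a) (f b)) {u v : List X}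
    (h : ltLex r u v) : ltLex r (u.map f) (v.map f) := by
  rcases h with ⟨w, hw, rfl⟩ | ⟨p, s, t, x, y, hxy, rfl, rfl⟩
  · exact Or.inl ⟨w.map f, by simpa using hw, by simp⟩
  · exact Or.inr ⟨p.map f, s.map f, t.map f, f x, f y, hf _ _ hxy, by simp, by simp⟩

theorem ltLex.append_left (p : List X) {u v : List X} (h : ltLex r u v) :
    ltLex r (p ++ u) (p ++ v) := by
  rcases h with ⟨w, hw, rfl⟩ | ⟨q, s, t, x, y, hxy, rfl, rfl⟩
  · exact Or.inl ⟨w, hw, by simp⟩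
  · exact Or.inr ⟨p ++ q, s, t, x, y, hxy, by simp, by simp⟩

end LtLex

theorem permLt_asymm {u v : List ℕ} : permLt u v → ¬ permLt v u :=
  ltLex_asymm fun _ _ => Nat.lt_asymm

theorem permLt_trichotomous {u v : List ℕ} : u ≠ v → permLt u v ∨ permLt v u :=
  ltLex_trichotomous fun _ _ => Nat.lt_or_gt_of_ne

section MulX

theorem prodX_cons (c : List ℕ) (M : List (List ℕ)) :
    prodX (c :: M) = c ++ (prodX M).map (· + c.length) := rfl

@[simp] theorem length_mulX (u v : List ℕ) : (mulX u v).length = u.length + v.length := by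
  simp [mulX]

theorem mulX_assoc (a b c : List ℕ) : mulX (mulX a b) c = mulX a (mulX b c) := by
  simp only [mulX, List.map_append, List.map_map, List.append_assoc, List.length_append,
    List.length_map]
  congr 2
  exact List.map_congr_left fun _ _ => by simp only [Function.comp_apply]; omega

theorem prodX_append (A B : List (List ℕ)) : prodX (A ++ B) = mulX (prodX A) (prodX B) := by
  induction A with
  | nil => simp [mulX, prodX]
  | cons a A ih => exact (congrArg (mulX a) ih).trans (mulX_assoc _ _ _).symm

theorem mulX_inj {a b c d : List ℕ} (h : mulX a b = mulX c d) (hac : a.length = c.length) :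
    a = c ∧ b = d := by
  rw [mulX, mulX, ← hac] at h
  obtain ⟨rfl, hbd⟩ := List.append_inj h hac
  exact ⟨rfl, List.map_injective_iff.mpr (add_left_injective a.length) hbd⟩

theorem IsPermWord.mulX {u v : List ℕ} (hu : IsPermWord u) (hv : IsPermWord v) :
    IsPermWord (mulX u v) := by
  refine ⟨hu.1.append (hv.1.map (add_left_injective _)) ?_, ?_⟩
  · intro a ha hb
    obtain ⟨c, hc, rfl⟩ := List.mem_map.mp hb
    have := (hu.2 _ ha).2
    have := (hv.2 c hc).1
    omega
  · intro i hi
    rw [length_mulX]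
    rcases List.mem_append.mp hi with h | h
    · have := hu.2 i h
      omega
    · obtain ⟨b, hb, rfl⟩ := List.mem_map.mp h
      have := hv.2 b hb
      omega

theorem isPermWord_prodX {L : List (List ℕ)} (h : ∀ τ ∈ L, IsPermWord τ) :
    IsPermWord (prodX L) := by
  induction L with
  | nil => exact ⟨List.nodup_nil, by simp [prodX]⟩
  | cons c M ih =>
    exact (h c List.mem_cons_self).mulX (ih fun τ hτ => h τ (List.mem_cons_of_mem c hτ))

theorem prodX_eq_nil_iff {L : List (List ℕ)} (h : ∀ τ ∈ L, τ ≠ []) :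
    prodX L = [] ↔ L = [] := by
  cases L with
  | nil => simp [prodX]
  | cons c M => simp [prodX_cons, h c List.mem_cons_self]

end MulX

section Connected

variable {x y : List ℕ}

theorem IsConnectedPerm.ne_append (hx : IsConnectedPerm x) (hy : IsPermWord y) (hy₀ : y ≠ [])
    {w : List ℕ} (hw : w ≠ []) : x ≠ y ++ w := by
  rintro rfl
  refine hx.2.2 y.length (List.length_pos_iff.mpr hy₀) ?_ fun z hz => ?_
  · simpa using List.length_pos_iff.mpr hw
  · rw [List.take_left] at hz
    exact (hy.2 z hz).2

theorem permLt_append_of_permLt (hx : IsConnectedPerm x) (hy : IsPermWord y) (hy₀ : y ≠ [])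
    (hxy : permLt x y) (P Q : List ℕ) : permLt (x ++ P) (y ++ Q) := by
  rcases hxy with ⟨w, hw, rfl⟩ | ⟨p, s, t, a, b, hab, rfl, rfl⟩
  · exact absurd rfl (hx.ne_append hy hy₀ hw)
  · exact Or.inr ⟨p, s ++ P, t ++ Q, a, b, hab, by simp, by simp⟩

end Connected

section Words

variable {A B L : List (List ℕ)}

theorem permLt_prodX (hA : ∀ τ ∈ A, IsConnectedPerm τ) (hB : ∀ τ ∈ B, IsConnectedPerm τ)
    (h : ltLex permLt A B) : permLt (prodX A) (prodX B) := by
  rcases h with ⟨W, hW, rfl⟩ | ⟨p, s, t, x, y, hxy, rfl, rfl⟩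
  · have hW₀ : prodX W ≠ [] := by
      rw [Ne, prodX_eq_nil_iff fun τ hτ => (hA τ (List.mem_append_right B hτ)).2.1]
      exact hW
    exact Or.inl ⟨_, by simpa using hW₀, prodX_append B W⟩
  · have hy := hB y (by simp)
    rw [prodX_append, prodX_append, mulX, mulX]
    refine (ltLex.map (fun _ _ hab => Nat.add_lt_add_right hab _) ?_).append_left _
    exact permLt_append_of_permLt (hA x (by simp)) hy.1 hy.2.1 hxy _ _

theorem ltLex_of_permLt_prodX (hA : ∀ τ ∈ A, IsConnectedPerm τ)
    (hB : ∀ τ ∈ B, IsConnectedPerm τ) (h : permLt (prodX A) (prodX B)) :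
    ltLex permLt A B := by
  have hAB : A ≠ B := by
    rintro rfl
    exact permLt_asymm h h
  exact (ltLex_trichotomous (fun _ _ => permLt_trichotomous) hAB).resolve_right
    fun h' => permLt_asymm h (permLt_prodX hB hA h')

theorem exists_append_of_take_le (hL : ∀ τ ∈ L, IsConnectedPerm τ) {i : ℕ}
    (hi : i ≤ (prodX L).length) (h : ∀ z ∈ (prodX L).take i, z ≤ i) :
    ∃ v w, L = v ++ w ∧ (prodX v).length = i := by
  induction L generalizing i with
  | nil => exact ⟨[], [], rfl, by simp [prodX] at hi ⊢; omega⟩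
  | cons c M ih =>
    have hc := hL c List.mem_cons_self
    rcases Nat.eq_zero_or_pos i with rfl | hi₀
    · exact ⟨[], c :: M, rfl, rfl⟩
    by_cases hic : i < c.length
    · refine absurd (fun z hz => h z ?_) (hc.2.2 i hi₀ hic)
      rwa [prodX_cons, List.take_append_of_le_length hic.le]
    push Not at hic
    rw [prodX_cons, List.length_append, List.length_map] at hi
    obtain ⟨v, w, rfl, hv⟩ := ih (fun τ hτ => hL τ (List.mem_cons_of_mem c hτ))
      (i := i - c.length) (by omega) fun z hz => by
        have := h (z + c.length) (by
          rw [prodX_cons, List.take_append, ← List.map_take]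
          exact List.mem_append_right _ (List.mem_map_of_mem hz))
        omega
    exact ⟨c :: v, w, rfl, by simp [prodX_cons, hv]; omega⟩

theorem exists_append_of_prodX_eq_mulX (hL : ∀ τ ∈ L, IsConnectedPerm τ) {u₁ u₂ : List ℕ}
    (hu₁ : IsPermWord u₁) (h : prodX L = mulX u₁ u₂) :
    ∃ v w, L = v ++ w ∧ prodX v = u₁ ∧ prodX w = u₂ := by
  obtain ⟨v, w, rfl, hv⟩ := exists_append_of_take_le hL (i := u₁.length)
    (by simp [h]) (by simpa [h, mulX] using fun z hz => (hu₁.2 z hz).2)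
  rw [prodX_append] at h
  exact ⟨v, w, rfl, mulX_inj h hv⟩

end Words

/-- **Lemma.** A permutation `σ` is a Lyndon permutation if and only if `φ(σ)`, the
word of connected permutations of its unique `×`-factorization, is a Lyndon word on the
alphabet `ℭ`. -/
theorem lyndonPerm_iff_lyndonWord :
    ∀ (u : List ℕ) (L : List (List ℕ)), IsPermWord u →
      (∀ τ ∈ L, IsConnectedPerm τ) → prodX L = u →
      (IsLyndonPerm u ↔ IsLyndonWordOnC L) := by
  rintro u L - hL rfl
  have hL₀ : prodX L ≠ [] ↔ L ≠ [] := (prodX_eq_nil_iff fun τ hτ => (hL τ hτ).2.1).not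
  refine ⟨fun ⟨hne, hlyn⟩ => ⟨hL₀.mp hne, ?_⟩, fun ⟨hne, hlyn⟩ => ⟨hL₀.mpr hne, ?_⟩⟩
  · rintro v w hv hw rfl
    obtain ⟨hvC, hwC⟩ := List.forall_mem_append.mp hL
    have hsplit := hlyn (prodX v) (prodX w) (isPermWord_prodX fun τ hτ => (hvC τ hτ).1)
      (isPermWord_prodX fun τ hτ => (hwC τ hτ).1)
      (mt (prodX_eq_nil_iff fun τ hτ => (hvC τ hτ).2.1).mp hv)
      (mt (prodX_eq_nil_iff fun τ hτ => (hwC τ hτ).2.1).mp hw) (prodX_append v w)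
    rw [← prodX_append] at hsplit
    exact ltLex_of_permLt_prodX (List.forall_mem_append.mpr ⟨hwC, hvC⟩) hL hsplit
  · rintro u₁ u₂ hu₁ - hu₁₀ hu₂₀ h
    obtain ⟨v, w, rfl, rfl, rfl⟩ := exists_append_of_prodX_eq_mulX hL hu₁ h
    have hwv : ∀ τ ∈ w ++ v, IsConnectedPerm τ := fun τ hτ =>
      hL τ (List.perm_append_comm.mem_iff.mp hτ)
    rw [← prodX_append]
    exact permLt_prodX hwv hL
      (hlyn v w (by rintro rfl; exact hu₁₀ rfl) (by rintro rfl; exact hu₂₀ rfl) rfl)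

end AdamsPaper

end
end
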